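/- Given a trail in the perturbed DBN G'_Z from a node w_i[t_1] (t_1 < t) to w_j[t], if the maximum intermediate time index t_m = max{t_1,...,t_{r-1}} satisfies t_m ≥ t and both neighbors have strictly smaller indices t_{m-1} < t_m and t_{m+1} < t_m, then the node α_{b_m}[t_m] is a collider on the trail, and neither it nor any of its descendants is observed in θ = {w_j^(t-1), W_{\bar j \bar i}^(t-1)}; hence the trail is not active given θ. -/
import Mathlib


/-- A trail of length `n` in the directed graph with edge relation `A`:
consecutive vertices are joined by an edge in one direction or the other. -/
def IsTrail {V : Type*} (A : V → V → Prop) (n : ℕ) (v : ℕ → V) : Prop :=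
  ∀ m < n, A (v m) (v (m + 1)) ∨ A (v (m + 1)) (v m)

/-- The vertex at position `m` is a collider on the trail `v`:
`v (m-1) → v m ← v (m+1)`. -/
def IsCollider {V : Type*} (A : V → V → Prop) (v : ℕ → V) (m : ℕ) : Prop :=
  A (v (m - 1)) (v m) ∧ A (v (m + 1)) (v m)

/-- A trail is active given `Z` if every intermediate non-collider is outside `Z`
and every intermediate collider is in `Z` or has a descendant in `Z`. -/
def IsActiveTrail {V : Type*} (A : V → V → Prop) (Z : Set V) (n : ℕ) (v : ℕ → V) : Prop :=
  IsTrail A n v ∧ ∀ m, 0 < m → m < n →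
    (¬ IsCollider A v m → v m ∉ Z) ∧
    (IsCollider A v m → ∃ d, Relation.ReflTransGen A (v m) d ∧ d ∈ Z)

/-- `x` and `y` are d-separated by `Z`: no trail between them is active given `Z`. -/
def DSep {V : Type*} (A : V → V → Prop) (Z : Set V) (x y : V) : Prop :=
  ∀ n (v : ℕ → V), 0 < n → v 0 = x → v n = y → ¬ IsActiveTrail A Z n v

/-- The directed graph `A` has no directed cycles. -/
def Acyclic {V : Type*} (A : V → V → Prop) : Prop :=
  ∀ x, ¬ Relation.TransGen A x x

/-- In the perturbed DBN (a DAG whose edges are nondecreasing in the time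
index `τ`), consider a trail from `v 0 = w_i[t₁]` with `t₁ < t` to `v r = w_j[t]`.  If an
intermediate node `v m` has the maximal time index, with `τ (v m) ≥ t` and both neighbours
at strictly smaller times, then `v m` is a collider on the trail, neither it nor any of
its descendants lies in the observation set `θ ⊆ {variables up to time t-1}`, and hence
the trail is not active given `θ`. -/
theorem max_time_node_is_unobserved_collider
    {W : Type*} (A : W → W → Prop) (hacyc : Acyclic A)
    (τ : W → ℕ) (hmono : ∀ a b, A a b → τ a ≤ τ b)
    (t : ℕ) (θ : Set W) (hθ : ∀ x ∈ θ, τ x < t)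
    (r : ℕ) (v : ℕ → W) (htrail : IsTrail A r v)
    (hstart : τ (v 0) < t) (hend : τ (v r) = t)
    (m : ℕ) (h0 : 0 < m) (hr : m < r)
    (hmt : t ≤ τ (v m))
    (hleft : τ (v (m - 1)) < τ (v m)) (hright : τ (v (m + 1)) < τ (v m)) :
    IsCollider A v m ∧
    (∀ d, Relation.ReflTransGen A (v m) d → d ∉ θ) ∧
    ¬ IsActiveTrail A θ r v := by
  have hcol : IsCollider A v m := by
    constructor
    · have h1 : m - 1 < r := lt_of_le_of_lt (Nat.sub_le m 1) hr
      rcases htrail (m-1) h1 with h | h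
      · rwa [Nat.sub_add_cancel h0] at h
      · exfalso
        rw [Nat.sub_add_cancel h0] at h
        exact absurd (hmono _ _ h) (not_le.mpr hleft)
    · rcases htrail m hr with h | h
      · exact absurd (hmono _ _ h) (not_le.mpr hright)
      · exact h
  have hdesc : ∀ d, Relation.ReflTransGen A (v m) d → d ∉ θ := by
    intro d hd hdθ
    have hτ : τ (v m) ≤ τ d :=
      Relation.ReflTransGen.trans_induction_on hd (fun _ => le_refl _)
        (fun hab => hmono _ _ hab) (fun _ _ h1 h2 => le_trans h1 h2)
    exact absurd (hθ d hdθ) (not_lt.mpr (le_trans hmt hτ))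
  refine ⟨hcol, hdesc, ?_⟩
  rintro ⟨-, hact⟩
  obtain ⟨d, hd, hdθ⟩ := (hact m h0 hr).2 hcol
  exact hdesc d hd hdθ
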